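/- arXiv:1812.03514 — 3 statements merged into one kernel-verified Lean document; each statement's English description precedes it below -/
import Mathlib

section
/- The Halphen system is covariant under Möbius transformations: let A_1, A_2, A_3 be differentiable complex (or real) functions of μ satisfying dA_j/dμ = −A_k A_l + A_j(A_k + A_l) for every permutation (j,k,l) of (1,2,3). Let a,b,c,d be constants with ad − bc = 1, and set μ̃ = (aμ+b)/(cμ+d). Then the functions Ã_j defined by Ã_j(μ̃) = (cμ+d)² A_j(μ) + c(cμ+d) satisfy the same Halphen system in the variable μ̃: dÃ_j/dμ̃ = −Ã_k Ã_l + Ã_j(Ã_k + Ã_l). -/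
/-!
Write `w = (a - cν)⁻¹`, which is `cμ + d` for `μ = (dν - b)/(a - cν)`. Then `Ã_j = u · (A_j ∘ μ) + t`
with `u = w²` and `t = c w`, and, because `ad - bc = 1`, both `dμ/dν` and `dw/dν / c` equal `w²`.
The chain rule therefore gives `dÃ_j/dν = u² A_j' + 2 t u A_j + t²`, and the Halphen right-hand side
transforms under `x ↦ u x + t` in exactly the same way.
-/

def halphenRHS {R : Type*} [CommRing R] (xj xk xl : R) : R :=
  -(xk * xl) + xj * (xk + xl)

theorem halphenRHS_affine {R : Type*} [CommRing R] (u t xj xk xl : R) :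
    halphenRHS (u * xj + t) (u * xk + t) (u * xl + t) =
      u ^ 2 * halphenRHS xj xk xl + 2 * t * u * xj + t ^ 2 := by
  unfold halphenRHS
  ring

section Moebius

variable {a b c d ν : ℝ}

theorem hasDerivAt_inv_sub_mul (hs : a - c * ν ≠ 0) :
    HasDerivAt (fun ν => (a - c * ν)⁻¹) (c * (a - c * ν)⁻¹ ^ 2) ν := by
  have hden : HasDerivAt (fun ν => a - c * ν) (-c) ν := by
    simpa using ((hasDerivAt_id ν).const_mul c).const_sub a
  refine (hden.inv hs).congr_deriv ?_
  rw [inv_pow]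
  ring

theorem hasDerivAt_moebius_inv (habcd : a * d - b * c = 1) (hs : a - c * ν ≠ 0) :
    HasDerivAt (fun ν => (d * ν - b) / (a - c * ν)) ((a - c * ν)⁻¹ ^ 2) ν := by
  have hnum : HasDerivAt (fun ν => d * ν - b) d ν := by
    simpa using ((hasDerivAt_id ν).const_mul d).sub_const b
  have hden : HasDerivAt (fun ν => a - c * ν) (-c) ν := by
    simpa using ((hasDerivAt_id ν).const_mul c).const_sub a
  refine (hnum.div hden hs).congr_deriv ?_
  rw [inv_pow, ← one_div, ← habcd]
  ring

theorem HasDerivAt.moebius_transform {f g : ℝ → ℝ} {f' : ℝ}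
    (hf : HasDerivAt f f' ((d * ν - b) / (a - c * ν)))
    (hg : ∀ ν, g ν = f ((d * ν - b) / (a - c * ν)) / (a - c * ν) ^ 2 + c / (a - c * ν))
    (habcd : a * d - b * c = 1) (hs : a - c * ν ≠ 0) :
    HasDerivAt g
      (((a - c * ν)⁻¹ ^ 2) ^ 2 * f' +
        2 * (c * (a - c * ν)⁻¹) * (a - c * ν)⁻¹ ^ 2 * f ((d * ν - b) / (a - c * ν)) +
          (c * (a - c * ν)⁻¹) ^ 2) ν := by
  have hw := hasDerivAt_inv_sub_mul hs
  have hfm := hf.comp ν (hasDerivAt_moebius_inv habcd hs)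
  have h := ((hw.pow 2).mul hfm).add (hw.const_mul c)
  refine (h.congr_deriv ?_).congr_of_eventuallyEq (.of_forall fun x => ?_)
  · simp only [Pi.pow_apply, Function.comp_apply, Nat.cast_ofNat]
    ring
  · rw [hg, Pi.add_apply, Pi.mul_apply, Pi.pow_apply, Function.comp_apply,
      div_eq_mul_inv, div_eq_mul_inv, inv_pow]
    ring

end Moebius

/-- Möbius covariance of the Halphen system: if `A j` solve
`dA_j/dμ = −A_k A_l + A_j(A_k + A_l)` for every permutation `(j,k,l)` of `(1,2,3)`,
and `ad − bc = 1`, then `Ã_j(ν) = (cμ+d)² A_j(μ) + c(cμ+d)` with `μ = (dν−b)/(a−cν)`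
(so that `ν = (aμ+b)/(cμ+d)` and `cμ+d = 1/(a−cν)`) solve the same system in `ν`,
wherever `a − cν ≠ 0`. -/
theorem halphen_moebius_covariance
    (A : Fin 3 → ℝ → ℝ)
    (hA : ∀ j k l : Fin 3, j ≠ k → k ≠ l → j ≠ l → ∀ μ : ℝ,
      HasDerivAt (A j) (-(A k μ * A l μ) + A j μ * (A k μ + A l μ)) μ)
    (a b c d : ℝ) (habcd : a * d - b * c = 1)
    (B : Fin 3 → ℝ → ℝ)
    (hB : ∀ j (ν : ℝ),
      B j ν = A j ((d * ν - b) / (a - c * ν)) / (a - c * ν) ^ 2 + c / (a - c * ν)) :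
    ∀ j k l : Fin 3, j ≠ k → k ≠ l → j ≠ l → ∀ ν : ℝ, a - c * ν ≠ 0 →
      HasDerivAt (B j) (-(B k ν * B l ν) + B j ν * (B k ν + B l ν)) ν := by
  intro j k l hjk hkl hjl ν hs
  have hB_affine : ∀ i, B i ν =
      (a - c * ν)⁻¹ ^ 2 * A i ((d * ν - b) / (a - c * ν)) + c * (a - c * ν)⁻¹ := fun i => by
    rw [hB, div_eq_mul_inv, div_eq_mul_inv, inv_pow]
    ring
  convert (hA j k l hjk hkl hjl _).moebius_transform (hB j) habcd hs using 1
  change halphenRHS (B j ν) (B k ν) (B l ν) = _ * halphenRHS _ _ _ + _ + _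
  rw [hB_affine, hB_affine, hB_affine, halphenRHS_affine]
end

section
/- Let (A_1,A_2,A_3) solve the Halphen system dA_j/dμ = −A_k A_l + A_j(A_k+A_l), and let (W_1,W_2,W_3) solve dW_j/dμ = −W_k W_l + W_j(A_k + A_l) for every permutation (j,k,l) of (1,2,3). For constants a,b,c,d with ad−bc = 1 and μ̃ = (aμ+b)/(cμ+d), define Ã_j(μ̃) = (cμ+d)²A_j(μ) + c(cμ+d) and W̃_j(μ̃) = (cμ+d)²W_j(μ). Then dW̃_j/dμ̃ = −W̃_k W̃_l + W̃_j(Ã_k + Ã_l). -/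
/-!
Here `ν` is the new variable `μ̃` and `μ = (dν - b)/s` with `s = a - cν`, so that `cμ + d = 1/s`.
Since `dμ/dν = 1/s²` and `ds/dν = -c`, differentiating `W_j(μ)/s²` gives the transformed
right-hand side `(-W_k W_l + W_j(A_k + A_l))/s⁴` plus the extra term `2c W_j/s³`; the latter is
exactly what the shifts `c/s` in `Ã_k + Ã_l` contribute.
-/

theorem hasDerivAt_const_sub_mul (a c x : ℝ) : HasDerivAt (fun x : ℝ => a - c * x) (-c) x := by
  simpa using ((hasDerivAt_id x).const_mul c).const_sub a

theorem hasDerivAt_moebius_inverse (a b c d x : ℝ) (hx : a - c * x ≠ 0) :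
    HasDerivAt (fun x : ℝ => (d * x - b) / (a - c * x)) ((a * d - b * c) / (a - c * x) ^ 2) x := by
  have hnum : HasDerivAt (fun x : ℝ => d * x - b) d x := by
    simpa using ((hasDerivAt_id x).const_mul d).sub_const b
  refine (hnum.div (hasDerivAt_const_sub_mul a c x) hx).congr_deriv ?_
  ring

theorem hasDerivAt_comp_moebius_inverse_div_sq {f : ℝ → ℝ} {f' : ℝ} (a b c d x : ℝ)
    (habcd : a * d - b * c = 1) (hx : a - c * x ≠ 0)
    (hf : HasDerivAt f f' ((d * x - b) / (a - c * x))) :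
    HasDerivAt (fun x : ℝ => f ((d * x - b) / (a - c * x)) / (a - c * x) ^ 2)
      (f' / (a - c * x) ^ 4 + 2 * c * f ((d * x - b) / (a - c * x)) / (a - c * x) ^ 3) x := by
  have hcomp := hf.comp x (hasDerivAt_moebius_inverse a b c d x hx)
  have hsq : HasDerivAt (fun x : ℝ => (a - c * x) ^ 2) ((2 : ℕ) * (a - c * x) ^ 1 * (-c)) x :=
    (hasDerivAt_const_sub_mul a c x).pow 2
  refine (hcomp.div hsq (pow_ne_zero 2 hx)).congr_deriv ?_
  rw [habcd, Function.comp_apply]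
  field_simp
  ring

theorem einstein_system_moebius_covariance_general
    (A W : Fin 3 → ℝ → ℝ)
    (hW : ∀ j k l : Fin 3, j ≠ k → k ≠ l → j ≠ l → ∀ μ : ℝ,
      HasDerivAt (W j) (-(W k μ * W l μ) + W j μ * (A k μ + A l μ)) μ)
    (a b c d : ℝ) (habcd : a * d - b * c = 1)
    (B V : Fin 3 → ℝ → ℝ)
    (hB : ∀ j (ν : ℝ),
      B j ν = A j ((d * ν - b) / (a - c * ν)) / (a - c * ν) ^ 2 + c / (a - c * ν))
    (hV : ∀ j (ν : ℝ),
      V j ν = W j ((d * ν - b) / (a - c * ν)) / (a - c * ν) ^ 2) :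
    ∀ j k l : Fin 3, j ≠ k → k ≠ l → j ≠ l → ∀ ν : ℝ, a - c * ν ≠ 0 →
      HasDerivAt (V j) (-(V k ν * V l ν) + V j ν * (B k ν + B l ν)) ν := by
  intro j k l hjk hkl hjl ν hν
  have hVj : V j = fun ν : ℝ => W j ((d * ν - b) / (a - c * ν)) / (a - c * ν) ^ 2 :=
    funext (hV j)
  rw [hV j, hV k, hV l, hB k, hB l, hVj]
  refine (hasDerivAt_comp_moebius_inverse_div_sq a b c d ν habcd hν
    (hW j k l hjk hkl hjl _)).congr_deriv ?_
  field_simp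
  ring

/-- Möbius covariance of the coupled system for SU(2)-invariant self-dual Einstein
metrics: if `(A_j)` solve the Halphen system and `(W_j)` solve
`dW_j/dμ = −W_k W_l + W_j(A_k + A_l)`, then with `μ = (dν−b)/(a−cν)` (i.e.
`ν = (aμ+b)/(cμ+d)`, `ad−bc = 1`, `cμ+d = 1/(a−cν)`), the transformed functions
`Ã_j(ν) = (cμ+d)²A_j(μ) + c(cμ+d)` and `W̃_j(ν) = (cμ+d)²W_j(μ)` satisfy
`dW̃_j/dν = −W̃_k W̃_l + W̃_j(Ã_k + Ã_l)` wherever `a − cν ≠ 0`. -/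
theorem einstein_system_moebius_covariance
    (A W : Fin 3 → ℝ → ℝ)
    (hA : ∀ j k l : Fin 3, j ≠ k → k ≠ l → j ≠ l → ∀ μ : ℝ,
      HasDerivAt (A j) (-(A k μ * A l μ) + A j μ * (A k μ + A l μ)) μ)
    (hW : ∀ j k l : Fin 3, j ≠ k → k ≠ l → j ≠ l → ∀ μ : ℝ,
      HasDerivAt (W j) (-(W k μ * W l μ) + W j μ * (A k μ + A l μ)) μ)
    (a b c d : ℝ) (habcd : a * d - b * c = 1)
    (B V : Fin 3 → ℝ → ℝ)
    (hB : ∀ j (ν : ℝ),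
      B j ν = A j ((d * ν - b) / (a - c * ν)) / (a - c * ν) ^ 2 + c / (a - c * ν))
    (hV : ∀ j (ν : ℝ),
      V j ν = W j ((d * ν - b) / (a - c * ν)) / (a - c * ν) ^ 2) :
    ∀ j k l : Fin 3, j ≠ k → k ≠ l → j ≠ l → ∀ ν : ℝ, a - c * ν ≠ 0 →
      HasDerivAt (V j) (-(V k ν * V l ν) + V j ν * (B k ν + B l ν)) ν :=
  einstein_system_moebius_covariance_general A W hW a b c d habcd B V hB hV
end

section
/- Let θ_2, θ_3, θ_4 be differentiable, nowhere-vanishing functions of μ on an interval, satisfying the Jacobi identity θ_3⁴ = θ_2⁴ + θ_4⁴. Let (W_1,W_2,W_3) solve dW_1/dμ = −W_2W_3 + 2W_1 (d/dμ)ln(θ_3θ_4), dW_2/dμ = −W_3W_1 + 2W_2 (d/dμ)ln(θ_2θ_4), dW_3/dμ = −W_1W_2 + 2W_3 (d/dμ)ln(θ_2θ_3). Then the quantity (θ_2⁴W_1² − θ_3⁴W_2² + θ_4⁴W_3²) / (θ_2θ_3θ_4)⁴ is constant in μ. -/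
/-!
Put `ℓ = 4 (θ₂'/θ₂ + θ₃'/θ₃ + θ₄'/θ₄)`, the logarithmic derivative of `D = (θ₂θ₃θ₄)⁴`. The
coefficients `2 (ln θᵢθⱼ)'` of the system are such that each `θₖ⁴Wₖ²` has derivative
`ℓ θₖ⁴Wₖ² − 2θₖ⁴W₁W₂W₃`. In `Q = θ₂⁴W₁² − θ₃⁴W₂² + θ₄⁴W₃²` the cubic terms add up to
`−2W₁W₂W₃ (θ₂⁴ − θ₃⁴ + θ₄⁴)`, which vanishes by the Jacobi identity, so `Q' = ℓQ` and `D' = ℓD`;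
hence `(Q/D)' = 0` on the interval.
-/

section LogarithmicDerivative

variable {𝕜 : Type*} [NontriviallyNormedField 𝕜] {f g : 𝕜 → 𝕜} {x f' ℓ m : 𝕜}

theorem HasDerivAt.self_mul_div (hf : HasDerivAt f f' x) (hx : f x ≠ 0) :
    HasDerivAt f (f x * (f' / f x)) x := by
  rwa [mul_div_cancel₀ _ hx]

theorem HasDerivAt.mul_of_logDeriv (hf : HasDerivAt f (f x * ℓ) x)
    (hg : HasDerivAt g (g x * m) x) :
    HasDerivAt (fun y => f y * g y) (f x * g x * (ℓ + m)) x :=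
  (hf.mul hg).congr_deriv (by ring)

theorem HasDerivAt.pow_of_logDeriv (hf : HasDerivAt f (f x * ℓ) x) (n : ℕ) :
    HasDerivAt (fun y => f y ^ n) (f x ^ n * (n * ℓ)) x := by
  refine (hf.fun_pow n).congr_deriv ?_
  cases n <;> simp [pow_succ]
  ring

theorem HasDerivAt.pow_mul_sq {W : 𝕜 → 𝕜} {p : 𝕜} (hf : HasDerivAt f (f x * ℓ) x)
    (hW : HasDerivAt W (-p + 2 * W x * m) x) (n : ℕ) :
    HasDerivAt (fun y => f y ^ n * W y ^ 2)
      (f x ^ n * W x ^ 2 * (n * ℓ + 4 * m) - 2 * f x ^ n * W x * p) x :=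
  ((hf.pow_of_logDeriv n).mul (hW.fun_pow 2)).congr_deriv (by ring)

theorem hasDerivAt_div_eq_zero_of_logDeriv_eq (hf : HasDerivAt f (f x * ℓ) x)
    (hg : HasDerivAt g (g x * ℓ) x) (hgx : g x ≠ 0) :
    HasDerivAt (fun y => f y / g y) 0 x :=
  (hf.fun_div hg hgx).congr_deriv (by ring)

end LogarithmicDerivative

theorem hasDerivAt_theta_quotient_eq_zero {𝕜 : Type*} [NontriviallyNormedField 𝕜]
    {θ₂ θ₃ θ₄ W₁ W₂ W₃ : 𝕜 → 𝕜} {t₂ t₃ t₄ x : 𝕜}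
    (hθ2 : HasDerivAt θ₂ t₂ x) (hθ3 : HasDerivAt θ₃ t₃ x) (hθ4 : HasDerivAt θ₄ t₄ x)
    (h2 : θ₂ x ≠ 0) (h3 : θ₃ x ≠ 0) (h4 : θ₄ x ≠ 0)
    (hJacobi : θ₃ x ^ 4 = θ₂ x ^ 4 + θ₄ x ^ 4)
    (hW1 : HasDerivAt W₁ (-(W₂ x * W₃ x) + 2 * W₁ x * (t₃ / θ₃ x + t₄ / θ₄ x)) x)
    (hW2 : HasDerivAt W₂ (-(W₃ x * W₁ x) + 2 * W₂ x * (t₂ / θ₂ x + t₄ / θ₄ x)) x)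
    (hW3 : HasDerivAt W₃ (-(W₁ x * W₂ x) + 2 * W₃ x * (t₂ / θ₂ x + t₃ / θ₃ x)) x) :
    HasDerivAt (fun y => (θ₂ y ^ 4 * W₁ y ^ 2 - θ₃ y ^ 4 * W₂ y ^ 2 + θ₄ y ^ 4 * W₃ y ^ 2)
      / (θ₂ y * θ₃ y * θ₄ y) ^ 4) 0 x := by
  have l2 := hθ2.self_mul_div h2
  have l3 := hθ3.self_mul_div h3
  have l4 := hθ4.self_mul_div h4
  have hQ := (((l2.pow_mul_sq hW1 4).sub (l3.pow_mul_sq hW2 4)).add (l4.pow_mul_sq hW3 4))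
  have hD := ((l2.mul_of_logDeriv l3).mul_of_logDeriv l4).pow_of_logDeriv 4
  refine hasDerivAt_div_eq_zero_of_logDeriv_eq (hQ.congr_deriv ?_) hD
    (pow_ne_zero _ (mul_ne_zero (mul_ne_zero h2 h3) h4))
  linear_combination (2 * W₁ x * W₂ x * W₃ x) * hJacobi

/-- Integral of motion of the system `W₁' = −W₂W₃ + 2W₁ (ln(θ₃θ₄))'`,
`W₂' = −W₃W₁ + 2W₂ (ln(θ₂θ₄))'`, `W₃' = −W₁W₂ + 2W₃ (ln(θ₂θ₃))'`, where
`θ₂, θ₃, θ₄` are differentiable, nowhere-vanishing and satisfy the Jacobi identity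
`θ₃⁴ = θ₂⁴ + θ₄⁴`: the quantity
`(θ₂⁴W₁² − θ₃⁴W₂² + θ₄⁴W₃²)/(θ₂θ₃θ₄)⁴` is constant. -/
theorem theta_system_integral
    (a b : ℝ) (θ₂ θ₃ θ₄ t₂ t₃ t₄ W₁ W₂ W₃ : ℝ → ℝ)
    (hθ2 : ∀ μ ∈ Set.Ioo a b, HasDerivAt θ₂ (t₂ μ) μ)
    (hθ3 : ∀ μ ∈ Set.Ioo a b, HasDerivAt θ₃ (t₃ μ) μ)
    (hθ4 : ∀ μ ∈ Set.Ioo a b, HasDerivAt θ₄ (t₄ μ) μ)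
    (hnz : ∀ μ ∈ Set.Ioo a b, θ₂ μ ≠ 0 ∧ θ₃ μ ≠ 0 ∧ θ₄ μ ≠ 0)
    (hJacobi : ∀ μ ∈ Set.Ioo a b, θ₃ μ ^ 4 = θ₂ μ ^ 4 + θ₄ μ ^ 4)
    (hW1 : ∀ μ ∈ Set.Ioo a b,
      HasDerivAt W₁ (-(W₂ μ * W₃ μ) + 2 * W₁ μ * (t₃ μ / θ₃ μ + t₄ μ / θ₄ μ)) μ)
    (hW2 : ∀ μ ∈ Set.Ioo a b,
      HasDerivAt W₂ (-(W₃ μ * W₁ μ) + 2 * W₂ μ * (t₂ μ / θ₂ μ + t₄ μ / θ₄ μ)) μ)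
    (hW3 : ∀ μ ∈ Set.Ioo a b,
      HasDerivAt W₃ (-(W₁ μ * W₂ μ) + 2 * W₃ μ * (t₂ μ / θ₂ μ + t₃ μ / θ₃ μ)) μ) :
    ∀ μ ∈ Set.Ioo a b, ∀ ν ∈ Set.Ioo a b,
      (θ₂ μ ^ 4 * W₁ μ ^ 2 - θ₃ μ ^ 4 * W₂ μ ^ 2 + θ₄ μ ^ 4 * W₃ μ ^ 2)
          / (θ₂ μ * θ₃ μ * θ₄ μ) ^ 4
        = (θ₂ ν ^ 4 * W₁ ν ^ 2 - θ₃ ν ^ 4 * W₂ ν ^ 2 + θ₄ ν ^ 4 * W₃ ν ^ 2)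
          / (θ₂ ν * θ₃ ν * θ₄ ν) ^ 4 := by
  have hzero : ∀ μ ∈ Set.Ioo a b, HasDerivAt (fun y =>
      (θ₂ y ^ 4 * W₁ y ^ 2 - θ₃ y ^ 4 * W₂ y ^ 2 + θ₄ y ^ 4 * W₃ y ^ 2)
        / (θ₂ y * θ₃ y * θ₄ y) ^ 4) 0 μ := fun μ hμ =>
    hasDerivAt_theta_quotient_eq_zero (hθ2 μ hμ) (hθ3 μ hμ) (hθ4 μ hμ) (hnz μ hμ).1
      (hnz μ hμ).2.1 (hnz μ hμ).2.2 (hJacobi μ hμ) (hW1 μ hμ) (hW2 μ hμ) (hW3 μ hμ)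
  intro μ hμ ν hν
  exact isOpen_Ioo.is_const_of_deriv_eq_zero isPreconnected_Ioo
    (fun y hy => (hzero y hy).differentiableAt.differentiableWithinAt)
    (fun y hy => (hzero y hy).deriv) hμ hν
end
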